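/- Let G be a connected interval graph on n vertices with interval representation I, endpoint set B_all = {b_1,...,b_n}, and let k < n. Then min over edge sets X with |X| ≤ k of α(G/X) equals the minimum of |B| over all B ⊆ B_all such that at most k intervals of I are disjoint from B. -/

import Mathlib

/-!
Call an interval bad for a point set `B` if it misses `B`. The intervals of a class of `G/X`
have a connected union, so each class behaves like the single interval spanned by it.

Given `B` with at most `k` bad intervals, contract from each bad interval the first edge of a
shortest path to a good one. Every class of `G/X` then contains an interval met by `B`, so the
points of `B` give a clique cover of `G/X` and `α(G/X) ≤ |B|`.

Conversely, given `X`, greedily stab the class hulls by their smallest right endpoints. This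
yields a set `B` of right endpoints and as many pairwise disjoint hulls, i.e. an independent set
of `G/X`. Every class contains an interval met by `B`, and un-contracting an edge creates at
most one new class, so at most `|X|` intervals are bad.
-/

def intervalGraph {n : ℕ} (J : Fin n → ℝ × ℝ) : SimpleGraph (Fin n) where
  Adj u v := u ≠ v ∧ (Set.Icc (J u).1 (J u).2 ∩ Set.Icc (J v).1 (J v).2).Nonempty
  symm := ⟨by
    rintro u v ⟨h, x, hx⟩
    exact ⟨h.symm, x, hx.2, hx.1⟩⟩
  loopless := ⟨by rintro v ⟨h, _⟩; exact h rfl⟩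

def edgeSub {V : Type*} (G : SimpleGraph V) (X : Set (Sym2 V)) : SimpleGraph V where
  Adj u v := G.Adj u v ∧ s(u, v) ∈ X
  symm := ⟨by rintro u v ⟨h, he⟩; exact ⟨h.symm, by rwa [Sym2.eq_swap]⟩⟩
  loopless := ⟨by rintro v ⟨h, _⟩; exact (G.ne_of_adj h) rfl⟩

def contract {V : Type*} (G : SimpleGraph V) (X : Set (Sym2 V)) :
    SimpleGraph (Quotient (edgeSub G X).reachableSetoid) where
  Adj c d := c ≠ d ∧ ∃ u v : V,
    Quotient.mk _ u = c ∧ Quotient.mk _ v = d ∧ G.Adj u v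
  symm := ⟨by rintro c d ⟨hne, u, v, hu, hv, h⟩; exact ⟨hne.symm, v, u, hv, hu, h.symm⟩⟩
  loopless := ⟨by rintro c ⟨hne, _⟩; exact hne rfl⟩

/-- The independence number: the maximum size of an independent set. -/
noncomputable def indepNum {W : Type*} (G : SimpleGraph W) : ℕ :=
  sSup {m : ℕ | ∃ s : Finset W,
    (↑s : Set W).Pairwise (fun u v => ¬ G.Adj u v) ∧ s.card = m}

theorem Nat.sInf_le_sInf_of_forall_exists_le {S T : Set ℕ} (hT : T.Nonempty)
    (h : ∀ b ∈ T, ∃ a ∈ S, a ≤ b) : sInf S ≤ sInf T := by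
  obtain ⟨a, ha, hle⟩ := h _ (Nat.sInf_mem hT)
  exact (Nat.sInf_le ha).trans hle

open Set in
/-- Greedy stabbing: repeatedly take the smallest right endpoint and discard the intervals it
meets. The intervals realising the chosen points are pairwise disjoint. -/
theorem exists_stabbing_rightEndpoints_card_le_pairwiseDisjoint {ι α : Type*} [LinearOrder α]
    (f : ι → α × α) (s : Finset ι) (hf : ∀ i ∈ s, (f i).1 ≤ (f i).2) :
    ∃ (B : Finset α) (t : Finset ι), t ⊆ s ∧ (∀ x ∈ B, ∃ i ∈ s, x = (f i).2) ∧
      (∀ i ∈ s, ∃ x ∈ B, x ∈ Icc (f i).1 (f i).2) ∧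
      (t : Set ι).PairwiseDisjoint (fun i => Icc (f i).1 (f i).2) ∧ B.card ≤ t.card := by
  classical
  induction s using Finset.strongInduction with
  | _ s ih =>
    rcases s.eq_empty_or_nonempty with rfl | hs
    · exact ⟨∅, ∅, by simp⟩
    obtain ⟨i₀, hi₀, hmin⟩ := s.exists_min_image (fun i => (f i).2) hs
    set r := (f i₀).2
    set s' := s.filter (fun i => r < (f i).1)
    have hi₀s' : i₀ ∉ s' := fun h => (Finset.mem_filter.1 h).2.not_ge (hf i₀ hi₀)
    obtain ⟨B, t, hts', hBend, hBstab, htdisj, hBt⟩ :=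
      ih s' (Finset.filter_ssubset.2
          ⟨i₀, hi₀, (Finset.mem_filter.not.1 hi₀s') ∘ And.intro hi₀⟩)
        (fun i hi => hf i (Finset.mem_of_mem_filter i hi))
    have hi₀t : i₀ ∉ t := fun h => hi₀s' (hts' h)
    refine ⟨insert r B, insert i₀ t,
      Finset.insert_subset hi₀ (hts'.trans (Finset.filter_subset _ _)), ?_, ?_, ?_, ?_⟩
    · simp only [Finset.mem_insert, forall_eq_or_imp]
      exact ⟨⟨i₀, hi₀, rfl⟩, fun x hx => (hBend x hx).imp fun i hi =>
        ⟨Finset.mem_of_mem_filter i hi.1, hi.2⟩⟩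
    · intro i hi
      by_cases hri : r < (f i).1
      · obtain ⟨x, hx, hxi⟩ := hBstab i (Finset.mem_filter.2 ⟨hi, hri⟩)
        exact ⟨x, Finset.mem_insert_of_mem hx, hxi⟩
      · exact ⟨r, Finset.mem_insert_self _ _, not_lt.1 hri, hmin i hi⟩
    · rw [Finset.coe_insert]
      refine htdisj.insert fun j hj _ => Set.disjoint_left.2 fun x hx₀ hxj => ?_
      exact (hx₀.2.trans_lt (Finset.mem_filter.1 (hts' hj)).2).not_ge hxj.1
    · rw [Finset.card_insert_of_notMem hi₀t]
      exact (Finset.card_insert_le _ _).trans (Nat.succ_le_succ hBt)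

open Set in
theorem exists_Icc_eq_biUnion_Icc_of_isPreconnected {ι α : Type*} [LinearOrder α]
    [TopologicalSpace α] [OrderClosedTopology α] (f : ι → α × α) {s : Finset ι}
    (hs : s.Nonempty) (hf : ∀ i ∈ s, (f i).1 ≤ (f i).2)
    (hconn : IsPreconnected (⋃ i ∈ s, Icc (f i).1 (f i).2)) :
    ∃ p : α × α, p.1 ≤ p.2 ∧ Icc p.1 p.2 = ⋃ i ∈ s, Icc (f i).1 (f i).2 ∧
      ∃ i ∈ s, p.2 = (f i).2 := by
  obtain ⟨i₁, hi₁, h₁⟩ := s.exists_mem_eq_inf' hs (fun i => (f i).1)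
  obtain ⟨i₂, hi₂, h₂⟩ := s.exists_mem_eq_sup' hs (fun i => (f i).2)
  have hlo : s.inf' hs (fun i => (f i).1) ∈ ⋃ i ∈ s, Icc (f i).1 (f i).2 :=
    mem_biUnion hi₁ (by rw [h₁]; exact left_mem_Icc.2 (hf i₁ hi₁))
  have hhi : s.sup' hs (fun i => (f i).2) ∈ ⋃ i ∈ s, Icc (f i).1 (f i).2 :=
    mem_biUnion hi₂ (by rw [h₂]; exact right_mem_Icc.2 (hf i₂ hi₂))
  refine ⟨(s.inf' hs (fun i => (f i).1), s.sup' hs (fun i => (f i).2)), ?_,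
    (hconn.Icc_subset hlo hhi).antisymm (iUnion₂_subset fun i hi => ?_), i₂, hi₂, h₂⟩
  · exact h₁ ▸ (hf i₁ hi₁).trans (s.le_sup' (fun i => (f i).2) hi₁)
  · exact Icc_subset_Icc (s.inf'_le (fun i => (f i).1) hi) (s.le_sup' (fun i => (f i).2) hi)

namespace SimpleGraph

variable {V : Type*}

theorem reachable_or_reachable_of_reachable_sup_edge {H : SimpleGraph V} {u v a b : V}
    (h : (H ⊔ edge u v).Reachable a b) :
    H.Reachable a b ∨
      ((H.Reachable a u ∨ H.Reachable a v) ∧ (H.Reachable b u ∨ H.Reachable b v)) := by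
  obtain ⟨p⟩ := h
  induction p with
  | nil => exact Or.inl .rfl
  | @cons x y b hxy _ ih =>
    rcases (sup_adj _ _ _ _).1 hxy with hH | he
    · exact ih.imp hH.reachable.trans
        (And.imp_left (Or.imp hH.reachable.trans hH.reachable.trans))
    · have hb : H.Reachable b u ∨ H.Reachable b v := by
        rcases ih with hyb | ⟨-, hb⟩
        · rcases (edge_adj _ _ _ _).1 he with ⟨⟨rfl, rfl⟩ | ⟨rfl, rfl⟩, -⟩
          exacts [Or.inr hyb.symm, Or.inl hyb.symm]
        · exact hb
      rcases (edge_adj _ _ _ _).1 he with ⟨⟨rfl, rfl⟩ | ⟨rfl, rfl⟩, -⟩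
      exacts [Or.inr ⟨Or.inl .rfl, hb⟩, Or.inr ⟨Or.inr .rfl, hb⟩]

theorem card_le_card_quotient_add_card [Finite V] (G : SimpleGraph V) (X : Finset (Sym2 V)) :
    Nat.card V ≤ Nat.card (Quotient (edgeSub G ↑X).reachableSetoid) + X.card := by
  classical
  induction X using Finset.induction with
  | empty =>
    rw [Finset.card_empty, add_zero]
    refine Nat.card_le_card_of_injective (Quotient.mk _) fun a b hab => ?_
    obtain ⟨p⟩ := Quotient.exact hab
    cases p with
    | nil => rfl
    | cons h _ => simp [edgeSub] at h
  | @insert e X he ih =>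
    induction e using Sym2.ind with | _ u v => ?_
    have hmono : edgeSub G ↑X ≤ edgeSub G ↑(insert s(u, v) X) := fun x y h =>
      ⟨h.1, Finset.mem_insert_of_mem h.2⟩
    have hle : edgeSub G ↑(insert s(u, v) X) ≤ edgeSub G ↑X ⊔ edge u v := by
      rintro x y ⟨hxy, hmem⟩
      rcases Finset.mem_insert.1 hmem with huv | hX
      · exact Or.inr ((edge_adj _ _ _ _).2 ⟨Sym2.eq_iff.1 huv, hxy.ne⟩)
      · exact Or.inl ⟨hxy, hX⟩
    let φ : Quotient (edgeSub G ↑X).reachableSetoid →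
        Quotient (edgeSub G ↑(insert s(u, v) X)).reachableSetoid :=
      Quotient.map' id fun _ _ h => h.mono hmono
    have hinj : Set.InjOn φ (Set.univ \ {Quotient.mk _ u}) := by
      rintro ⟨a⟩ ha ⟨b⟩ hb hab
      have hau : ¬ (edgeSub G ↑X).Reachable a u := fun h => ha.2 (Quotient.sound h)
      have hbu : ¬ (edgeSub G ↑X).Reachable b u := fun h => hb.2 (Quotient.sound h)
      rcases reachable_or_reachable_of_reachable_sup_edge ((Quotient.exact hab).mono hle) with
        h | ⟨ha | ha, hb | hb⟩
      exacts [Quotient.sound h, (hau ha).elim, (hau ha).elim, (hbu hb).elim,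
        Quotient.sound (ha.trans hb.symm)]
    have hcard := Set.ncard_le_ncard_of_injOn φ (fun _ _ => Set.mem_univ _) hinj
    rw [Set.ncard_sdiff_singleton_of_mem (Set.mem_univ _), Set.ncard_univ, Set.ncard_univ] at hcard
    rw [Finset.card_insert_of_notMem he]
    omega

def ClassesMeetCompl (G : SimpleGraph V) (X : Set (Sym2 V)) (S : Finset V) : Prop :=
  ∀ c : Quotient (edgeSub G X).reachableSetoid, ∃ w ∉ S, Quotient.mk _ w = c

theorem ClassesMeetCompl.card_le [Fintype V] {G : SimpleGraph V} {X : Finset (Sym2 V)}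
    {S : Finset V} (h : G.ClassesMeetCompl ↑X S) : S.card ≤ X.card := by
  classical
  have := Fintype.ofFinite (Quotient (edgeSub G ↑X).reachableSetoid)
  choose w hwS hw using h
  have hcompl : Fintype.card (Quotient (edgeSub G ↑X).reachableSetoid) ≤ Sᶜ.card :=
    Finset.card_le_card_of_injOn w (fun c _ => Finset.mem_compl.2 (hwS c))
      (Function.LeftInverse.injective hw).injOn
  have hquot := card_le_card_quotient_add_card G X
  rw [Finset.card_compl] at hcompl
  rw [Nat.card_eq_fintype_card, Nat.card_eq_fintype_card] at hquot
  have := S.card_le_univ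
  omega

theorem Reachable.exists_adj_dist_lt {G : SimpleGraph V} {u g : V} (h : G.Reachable u g)
    (hne : u ≠ g) : ∃ w, G.Adj u w ∧ G.dist w g < G.dist u g := by
  obtain ⟨p, hp⟩ := h.exists_walk_length_eq_dist
  cases p with
  | nil => exact (hne rfl).elim
  | cons hadj q =>
    rw [Walk.length_cons] at hp
    exact ⟨_, hadj, (dist_le q).trans_lt (by omega)⟩

/-- Contract, for each `u ∈ S`, the first edge of a shortest path from `u` to `g`. -/
theorem Connected.exists_classesMeetCompl {G : SimpleGraph V} (hG : G.Connected) {S : Finset V}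
    {g : V} (hg : g ∉ S) :
    ∃ X : Finset (Sym2 V),
      ↑X ⊆ G.edgeSet ∧ X.card ≤ S.card ∧ G.ClassesMeetCompl ↑X S := by
  classical
  have hstep : ∀ u ∈ S, ∃ w, G.Adj u w ∧ G.dist w g < G.dist u g := fun u hu =>
    (hG.preconnected u g).exists_adj_dist_lt fun h => hg (h ▸ hu)
  choose! next hadj hdist using hstep
  set X := S.image fun u => s(u, next u)
  have hreach : ∀ u, ∃ w ∉ S, (edgeSub G ↑X).Reachable u w := by
    intro u
    induction hd : G.dist u g using Nat.strong_induction_on generalizing u with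
    | _ d ih =>
      by_cases hu : u ∈ S
      · obtain ⟨w, hw, hr⟩ := ih _ (hd ▸ hdist u hu) (next u) rfl
        have hX : s(u, next u) ∈ X := Finset.mem_image_of_mem _ hu
        exact ⟨w, hw, (Adj.reachable (G := edgeSub G ↑X) ⟨hadj u hu, hX⟩).trans hr⟩
      · exact ⟨u, hu, .rfl⟩
  refine ⟨X, ?_, Finset.card_image_le, fun c => ?_⟩
  · intro e he
    obtain ⟨u, hu, rfl⟩ := Finset.mem_image.1 he
    exact hadj u hu
  · obtain ⟨w, hw, hr⟩ := hreach c.out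
    exact ⟨w, hw, (Quotient.sound hr.symm).trans c.out_eq⟩

end SimpleGraph

theorem indepNum_le_of_forall_card_le {W : Type*} {G : SimpleGraph W} {m : ℕ}
    (h : ∀ s : Finset W, (↑s : Set W).Pairwise (fun u v => ¬ G.Adj u v) → s.card ≤ m) :
    indepNum G ≤ m :=
  csSup_le ⟨0, ∅, by simp, rfl⟩ fun _ ⟨s, hs, hm⟩ => hm ▸ h s hs

theorem card_le_indepNum {W : Type*} [Finite W] {G : SimpleGraph W} {s : Finset W}
    (hs : (↑s : Set W).Pairwise (fun u v => ¬ G.Adj u v)) : s.card ≤ indepNum G := by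
  have := Fintype.ofFinite W
  refine le_csSup ⟨Fintype.card W, ?_⟩ ⟨s, hs, rfl⟩
  rintro _ ⟨t, -, rfl⟩
  exact t.card_le_univ

theorem indepNum_le_card_of_fibres_isClique {W β : Type*} {G : SimpleGraph W} (f : W → β)
    (B : Finset β) (hf : ∀ c, f c ∈ B)
    (hclique : ∀ c d, c ≠ d → f c = f d → G.Adj c d) :
    indepNum G ≤ B.card :=
  indepNum_le_of_forall_card_le fun _ hs =>
    Finset.card_le_card_of_injOn f (fun c _ => hf c) fun c hc d hd hcd =>
      by_contra fun hne => hs hc hd hne (hclique c d hne hcd)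

section IntervalGraph

open Set

variable {n : ℕ} (J : Fin n → ℝ × ℝ)

theorem isPreconnected_biUnion_Icc_of_le_intervalGraph {H : SimpleGraph (Fin n)}
    (hH : H ≤ intervalGraph J) {t : Set (Fin n)}
    (ht : ∀ i ∈ t, ∀ j, j ∈ t ↔ H.Reachable i j) :
    IsPreconnected (⋃ v ∈ t, Icc (J v).1 (J v).2) := by
  refine IsPreconnected.biUnion_of_reflTransGen (fun _ _ => isPreconnected_Icc) fun i hi j hj => ?_
  obtain ⟨p⟩ := (ht i hi j).1 hj
  clear hj
  induction p with
  | nil => exact .refl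
  | cons hadj _ ih =>
    exact .head ⟨(hH hadj).2, hi⟩ (ih ((ht _ hi _).2 hadj.reachable))

theorem exists_Icc_eq_biUnion_Icc_of_class (hJ : ∀ v, (J v).1 ≤ (J v).2)
    (X : Set (Sym2 (Fin n)))
    (c : Quotient (edgeSub (intervalGraph J) X).reachableSetoid) :
    ∃ p : ℝ × ℝ, p.1 ≤ p.2 ∧
      Icc p.1 p.2 = ⋃ v ∈ {v | Quotient.mk _ v = c}, Icc (J v).1 (J v).2 ∧
      ∃ v, Quotient.mk _ v = c ∧ p.2 = (J v).2 := by
  classical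
  have hcls : ∀ i ∈ {v | Quotient.mk _ v = c}, ∀ j, j ∈ {v | Quotient.mk _ v = c} ↔
      (edgeSub (intervalGraph J) X).Reachable i j := by
    rintro i rfl j
    exact ⟨fun h => (Quotient.exact h).symm, fun h => Quotient.sound h.symm⟩
  have hconn := isPreconnected_biUnion_Icc_of_le_intervalGraph J
    (fun _ _ h => h.1 : edgeSub (intervalGraph J) X ≤ _) hcls
  rw [← Set.coe_toFinset {v | Quotient.mk _ v = c}] at hconn ⊢
  obtain ⟨p, hp, hpeq, v, hv, hpv⟩ := exists_Icc_eq_biUnion_Icc_of_isPreconnected J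
    ⟨c.out, by simp⟩ (fun v _ => hJ v) hconn
  exact ⟨p, hp, hpeq, v, by simpa using hv, hpv⟩

theorem exists_rightEndpoints_card_le_indepNum_contract (hJ : ∀ v, (J v).1 ≤ (J v).2)
    (X : Finset (Sym2 (Fin n))) :
    ∃ B : Finset ℝ, (∀ x ∈ B, ∃ v : Fin n, x = (J v).2) ∧
      (Finset.univ.filter fun v : Fin n => ∀ x ∈ B, ¬ ((J v).1 ≤ x ∧ x ≤ (J v).2)).card
        ≤ X.card ∧
      B.card ≤ indepNum (contract (intervalGraph J) ↑X) := by
  have := Fintype.ofFinite (Quotient (edgeSub (intervalGraph J) ↑X).reachableSetoid)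
  choose F hFle hFeq hFend using exists_Icc_eq_biUnion_Icc_of_class J hJ ↑X
  obtain ⟨B, t, -, hBend, hBstab, htdisj, hBt⟩ :=
    exists_stabbing_rightEndpoints_card_le_pairwiseDisjoint F Finset.univ fun c _ => hFle c
  have hmemF : ∀ v, Icc (J v).1 (J v).2 ⊆ Icc (F (Quotient.mk _ v)).1 (F (Quotient.mk _ v)).2 :=
    fun v => (hFeq _).symm ▸ subset_biUnion_of_mem (u := fun v => Icc (J v).1 (J v).2) rfl
  refine ⟨B, fun x hx => ?_, ?_, hBt.trans (card_le_indepNum ?_)⟩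
  · obtain ⟨c, -, rfl⟩ := hBend x hx
    obtain ⟨v, -, hv⟩ := hFend c
    exact ⟨v, hv⟩
  · refine SimpleGraph.ClassesMeetCompl.card_le (G := intervalGraph J) fun c => ?_
    obtain ⟨x, hxB, hx⟩ := hBstab c (Finset.mem_univ _)
    rw [hFeq, mem_iUnion₂] at hx
    obtain ⟨v, hv, hxv⟩ := hx
    exact ⟨v, fun hbad => (Finset.mem_filter.1 hbad).2 x hxB hxv, hv⟩
  · rintro c hc d hd hcd ⟨-, u, v, rfl, rfl, -, x, hxu, hxv⟩
    exact disjoint_left.1 (htdisj hc hd hcd) (hmemF u hxu) (hmemF v hxv)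

theorem exists_contract_indepNum_le (hconn : (intervalGraph J).Connected) {k : ℕ} (hk : k < n)
    (B : Finset ℝ)
    (hbad : (Finset.univ.filter fun v : Fin n =>
      ∀ x ∈ B, ¬ ((J v).1 ≤ x ∧ x ≤ (J v).2)).card ≤ k) :
    ∃ X : Finset (Sym2 (Fin n)), ↑X ⊆ (intervalGraph J).edgeSet ∧ X.card ≤ k ∧
      indepNum (contract (intervalGraph J) ↑X) ≤ B.card := by
  set S := Finset.univ.filter fun v : Fin n => ∀ x ∈ B, ¬ ((J v).1 ≤ x ∧ x ≤ (J v).2)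
  obtain ⟨g, hg⟩ : ∃ g, g ∉ S := by
    by_contra! h
    have := Finset.card_le_card (show Finset.univ ⊆ S from fun v _ => h v)
    simp only [Finset.card_univ, Fintype.card_fin] at this
    omega
  obtain ⟨X, hXE, hXS, hmeet⟩ := hconn.exists_classesMeetCompl hg
  refine ⟨X, hXE, hXS.trans hbad, ?_⟩
  choose w hwS hw using hmeet
  have hstab : ∀ c, ∃ x ∈ B, x ∈ Icc (J (w c)).1 (J (w c)).2 := fun c => by
    simpa [S] using hwS c
  choose x hxB hxw using hstab
  refine indepNum_le_card_of_fibres_isClique x B hxB fun c d hne hcd => ?_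
  refine ⟨hne, w c, w d, hw c, hw d, fun h => hne ?_, x c, hxw c, hcd ▸ hxw d⟩
  rw [← hw c, ← hw d, h]

end IntervalGraph

/-- For a connected interval graph `G` on `n` intervals and `k < n`:
`min {α(G/X) : |X| ≤ k}` equals the minimum of `|B|` over all sets `B` of
endpoints such that at most `k` intervals are disjoint from `B`. -/
theorem stmt15 {n : ℕ} (J : Fin n → ℝ × ℝ) (hJ : ∀ v, (J v).1 ≤ (J v).2)
    (hconn : (intervalGraph J).Connected) (k : ℕ) (hk : k < n) :
    sInf {m : ℕ | ∃ X : Finset (Sym2 (Fin n)),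
        ↑X ⊆ (intervalGraph J).edgeSet ∧ X.card ≤ k ∧
        indepNum (contract (intervalGraph J) ↑X) = m}
      = sInf {m : ℕ | ∃ B : Finset ℝ,
          (∀ x ∈ B, ∃ v : Fin n, x = (J v).2) ∧
          (Finset.univ.filter fun v : Fin n =>
            ∀ x ∈ B, ¬ ((J v).1 ≤ x ∧ x ≤ (J v).2)).card ≤ k ∧
          B.card = m} := by
  apply le_antisymm
  · obtain ⟨B, hBend, hbad, -⟩ := exists_rightEndpoints_card_le_indepNum_contract J hJ ∅
    refine Nat.sInf_le_sInf_of_forall_exists_le ⟨_, B, hBend, hbad.trans (by simp), rfl⟩ ?_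
    rintro _ ⟨B, -, hbad, rfl⟩
    obtain ⟨X, hXE, hXk, hX⟩ := exists_contract_indepNum_le J hconn hk B hbad
    exact ⟨_, ⟨X, hXE, hXk, rfl⟩, hX⟩
  · refine Nat.sInf_le_sInf_of_forall_exists_le ⟨_, ∅, by simp, by simp, rfl⟩ ?_
    rintro _ ⟨X, -, hXk, rfl⟩
    obtain ⟨B, hBend, hbad, hB⟩ := exists_rightEndpoints_card_le_indepNum_contract J hJ X
    exact ⟨_, ⟨B, hBend, hbad.trans hXk, rfl⟩, hB⟩
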